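/- arXiv:1704.04541 — 2 statements merged into one kernel-verified Lean document; each statement's English description precedes it below -/
import Mathlib

section
/- Fix h > 0 and m > 1 with h·m/(m-1) < 2, and fix μ ≥ 0. The function f(ρ) = √ρ·(1 - (h/2)·(1 - (m/(m-1))·ρ^{m-1})) - √μ has a unique solution ρ ≥ 0 with f(ρ) = 0 when μ > 0, and moreover f is strictly increasing in ρ on [0, ∞). -/
/-! The factor `1 - (h/2)(1 - m/(m-1) ρ^(m-1))` is nondecreasing in `ρ ≥ 0` and bounded below
by `1 - h/2`, which is positive because `h < h m/(m-1) < 2`. Hence `f` is a strictly increasing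
nonnegative function times a nondecreasing positive one, minus a constant. Since
`f 0 = -√μ ≤ 0` and the factor is at least `1` for `ρ ≥ 1`, we get
`f (max 1 μ) ≥ √(max 1 μ) - √μ ≥ 0`; the intermediate value theorem gives a root, and strict
monotonicity makes it unique. -/

open Set

lemma StrictMonoOn.mul_monotoneOn {α M₀ : Type*} [Preorder α] [MulZeroClass M₀]
    [PartialOrder M₀] [PosMulMono M₀] [MulPosStrictMono M₀] {f g : α → M₀} {s : Set α}
    (hf : StrictMonoOn f s) (hg : MonotoneOn g s) (hf₀ : ∀ x ∈ s, 0 ≤ f x)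
    (hg₀ : ∀ x ∈ s, 0 < g x) :
    StrictMonoOn (fun x => f x * g x) s :=
  fun _ ha _ hb hab => mul_lt_mul (hf ha hb hab) (hg ha hb hab.le) (hg₀ _ ha) (hf₀ _ hb)

lemma existsUnique_zero_of_strictMonoOn_Ici {f : ℝ → ℝ} {a b : ℝ} (hab : a ≤ b)
    (hf : StrictMonoOn f (Ici a)) (hcont : ContinuousOn f (Icc a b)) (ha : f a ≤ 0)
    (hb : 0 ≤ f b) : ∃! x, a ≤ x ∧ f x = 0 := by
  obtain ⟨x, hx, hfx⟩ := intermediate_value_Icc hab hcont ⟨ha, hb⟩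
  exact ⟨x, ⟨hx.1, hfx⟩, fun y ⟨hy, hfy⟩ => hf.injOn hy hx.1 (hfy.trans hfx.symm)⟩

lemma one_le_div_sub_one {m : ℝ} (hm : 1 < m) : 1 ≤ m / (m - 1) :=
  (one_le_div (by linarith)).2 (by linarith)

noncomputable def fisherRaoFactor (h m ρ : ℝ) : ℝ :=
  1 - h / 2 * (1 - m / (m - 1) * ρ ^ (m - 1))

section FisherRaoFactor

variable {h m : ℝ}

lemma continuous_fisherRaoFactor (hm : 1 ≤ m) : Continuous (fisherRaoFactor h m) :=
  continuous_const.sub <| continuous_const.mul <| continuous_const.sub <|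
    continuous_const.mul <| Real.continuous_rpow_const (by linarith)

lemma fisherRaoFactor_monotoneOn (hh : 0 ≤ h) (hm : 1 ≤ m) :
    MonotoneOn (fisherRaoFactor h m) (Ici 0) := by
  intro x hx y _ hxy
  have hc : 0 ≤ m / (m - 1) := div_nonneg (by linarith) (by linarith)
  have hpow : x ^ (m - 1) ≤ y ^ (m - 1) := Real.rpow_le_rpow hx hxy (by linarith)
  unfold fisherRaoFactor
  gcongr

lemma one_sub_half_le_fisherRaoFactor (hh : 0 ≤ h) (hm : 1 ≤ m) {ρ : ℝ} (hρ : 0 ≤ ρ) :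
    1 - h / 2 ≤ fisherRaoFactor h m ρ := by
  have : 0 ≤ m / (m - 1) * ρ ^ (m - 1) :=
    mul_nonneg (div_nonneg (by linarith) (by linarith)) (Real.rpow_nonneg hρ _)
  unfold fisherRaoFactor
  nlinarith

lemma one_le_fisherRaoFactor (hh : 0 ≤ h) (hm : 1 < m) {ρ : ℝ} (hρ : 1 ≤ ρ) :
    1 ≤ fisherRaoFactor h m ρ := by
  have hpow : 1 ≤ ρ ^ (m - 1) := Real.one_le_rpow hρ (by linarith)
  have : 1 ≤ m / (m - 1) * ρ ^ (m - 1) :=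
    one_le_mul_of_one_le_of_one_le (one_le_div_sub_one hm) hpow
  unfold fisherRaoFactor
  nlinarith

lemma strictMonoOn_sqrt_mul_fisherRaoFactor (hh : 0 ≤ h) (h2 : h < 2) (hm : 1 ≤ m) :
    StrictMonoOn (fun ρ => √ρ * fisherRaoFactor h m ρ) (Ici 0) :=
  Real.strictMonoOn_sqrt.mul_monotoneOn (fisherRaoFactor_monotoneOn hh hm)
    (fun x _ => Real.sqrt_nonneg x)
    (fun _ hρ => (sub_pos.2 (by linarith)).trans_le (one_sub_half_le_fisherRaoFactor hh hm hρ))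

end FisherRaoFactor

theorem stmt_8_general (h m μ : ℝ) (hh : 0 < h) (hm : 1 < m) (hhm : h * m / (m - 1) < 2)
    (f : ℝ → ℝ)
    (hf : ∀ ρ, f ρ = Real.sqrt ρ * (1 - h / 2 * (1 - m / (m - 1) * ρ ^ (m - 1)))
          - Real.sqrt μ) :
    StrictMonoOn f (Set.Ici 0) ∧ (0 < μ → ∃! ρ : ℝ, 0 ≤ ρ ∧ f ρ = 0) := by
  have hfR : f = fun ρ => √ρ * fisherRaoFactor h m ρ - √μ := funext hf
  have h2 : h < 2 := calc
    h ≤ h * (m / (m - 1)) := le_mul_of_one_le_right hh.le (one_le_div_sub_one hm)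
    _ = h * m / (m - 1) := mul_div_assoc h m (m - 1) |>.symm
    _ < 2 := hhm
  have hmono : StrictMonoOn f (Ici 0) := hfR ▸ fun x hx y hy hxy =>
    sub_lt_sub_right (strictMonoOn_sqrt_mul_fisherRaoFactor hh.le h2 hm.le hx hy hxy) _
  refine ⟨hmono, fun _ => ?_⟩
  have hR : 1 ≤ max 1 μ := le_max_left 1 μ
  refine existsUnique_zero_of_strictMonoOn_Ici (zero_le_one.trans hR) hmono ?_ ?_ ?_
  · rw [hfR]
    exact (Real.continuous_sqrt.mul (continuous_fisherRaoFactor hm.le) |>.sub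
      continuous_const).continuousOn
  · simp [hfR]
  · rw [hfR, sub_nonneg]
    calc √μ ≤ √(max 1 μ) := Real.sqrt_le_sqrt (le_max_right 1 μ)
      _ ≤ √(max 1 μ) * fisherRaoFactor h m (max 1 μ) :=
        le_mul_of_one_le_right (Real.sqrt_nonneg _) (one_le_fisherRaoFactor hh.le hm hR)

theorem stmt_8 (h m μ : ℝ) (hh : 0 < h) (hm : 1 < m) (hhm : h * m / (m - 1) < 2)
    (hμ : 0 ≤ μ)
    (f : ℝ → ℝ)
    (hf : ∀ ρ, f ρ = Real.sqrt ρ * (1 - h / 2 * (1 - m / (m - 1) * ρ ^ (m - 1)))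
          - Real.sqrt μ) :
    StrictMonoOn f (Set.Ici 0) ∧ (0 < μ → ∃! ρ : ℝ, 0 ≤ ρ ∧ f ρ = 0) :=
  stmt_8_general h m μ hh hm hhm f hf
end

section
/- Let X be a metric space with distance d, T > 0, h > 0, N = ⌊T/h⌋, and let x_0,…,x_N ∈ X satisfy (1/h)·∑_{k=0}^{N-1} d(x_k, x_{k+1})² ≤ C. Define x_h(t) = x_{k+1} for t ∈ (kh, (k+1)h] and x_h(0) = x_0. Then for all 0 ≤ s ≤ t ≤ Nh, d(x_h(s), x_h(t)) ≤ √C·√(t - s + h). -/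
theorem stmt_17 {X : Type*} [MetricSpace X] (T h C : ℝ) (hT : 0 < T) (hh : 0 < h)
    (N : ℕ) (hN : N = ⌊T / h⌋₊)
    (x : ℕ → X)
    (hsum : (1 / h) * ∑ k ∈ Finset.range N, dist (x k) (x (k + 1)) ^ 2 ≤ C)
    (xh : ℝ → X) (hxh : ∀ t : ℝ, xh t = if t ≤ 0 then x 0 else x ⌈t / h⌉₊) :
    ∀ s t : ℝ, 0 ≤ s → s ≤ t → t ≤ N * h →
      dist (xh s) (xh t) ≤ Real.sqrt C * Real.sqrt (t - s + h) := by
  intro s t hs hst htN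
  have hC : 0 ≤ C := le_trans (by positivity) hsum
  set j := ⌈s / h⌉₊ with hj
  set k := ⌈t / h⌉₊ with hk
  have hxs : xh s = x j := by
    rw [hxh]; split_ifs with h'
    · have : s = 0 := le_antisymm h' hs
      simp [hj, this]
    · rfl
  have hxt : xh t = x k := by
    rw [hxh]; split_ifs with h'
    · have : t = 0 := le_antisymm h' (hs.trans hst)
      simp [hk, this]
    · rfl
  have hjk : j ≤ k := Nat.ceil_le_ceil (by gcongr)
  have hkN : k ≤ N := Nat.ceil_le.mpr ((div_le_iff₀ hh).mpr htN)
  -- cast inequalities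
  have hjc : s / h ≤ (j : ℝ) := Nat.le_ceil _
  have hkc : (k : ℝ) ≤ t / h + 1 := by
    have := Nat.ceil_lt_add_one (a := t / h) (div_nonneg (hs.trans hst) hh.le)
    exact this.le
  have hcard : ((k - j : ℕ) : ℝ) * h ≤ t - s + h := by
    rw [Nat.cast_sub hjk]
    have h1 : (k : ℝ) - j ≤ t / h + 1 - s / h := by linarith
    have := mul_le_mul_of_nonneg_right h1 hh.le
    calc ((k : ℝ) - j) * h ≤ (t / h + 1 - s / h) * h := this
      _ = t - s + h := by field_simp; ring
  have hsum' : ∑ i ∈ Finset.range N, dist (x i) (x (i + 1)) ^ 2 ≤ C * h := by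
    rw [div_mul_eq_mul_div, one_mul, div_le_iff₀ hh] at hsum
    exact hsum
  have hsub : ∑ i ∈ Finset.Ico j k, dist (x i) (x (i + 1)) ^ 2 ≤ C * h := by
    refine le_trans (Finset.sum_le_sum_of_subset_of_nonneg ?_ ?_) hsum'
    · intro i hi
      exact Finset.mem_range.mpr (lt_of_lt_of_le (Finset.mem_Ico.mp hi).2 hkN)
    · intro i _ _; positivity
  have hd : dist (x j) (x k) ≤ ∑ i ∈ Finset.Ico j k, dist (x i) (x (i + 1)) :=
    dist_le_Ico_sum_dist x hjk
  have hcs : (∑ i ∈ Finset.Ico j k, dist (x i) (x (i + 1))) ^ 2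
      ≤ ((k - j : ℕ) : ℝ) * ∑ i ∈ Finset.Ico j k, dist (x i) (x (i + 1)) ^ 2 := by
    have := sq_sum_le_card_mul_sum_sq (s := Finset.Ico j k)
      (f := fun i => dist (x i) (x (i + 1)))
    simpa [Nat.card_Ico] using this
  rw [hxs, hxt, ← Real.sqrt_mul hC]
  rw [Real.le_sqrt dist_nonneg]
  have hsq : dist (x j) (x k) ^ 2 ≤ (∑ i ∈ Finset.Ico j k, dist (x i) (x (i + 1))) ^ 2 := by
    have hnn : 0 ≤ ∑ i ∈ Finset.Ico j k, dist (x i) (x (i + 1)) :=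
      Finset.sum_nonneg fun i _ => dist_nonneg
    exact pow_le_pow_left₀ dist_nonneg hd 2
  have hnnkj : (0 : ℝ) ≤ ((k - j : ℕ) : ℝ) := Nat.cast_nonneg _
  · nlinarith [mul_le_mul_of_nonneg_left hsub hnnkj, mul_le_mul_of_nonneg_left hcard hC]
  · exact mul_nonneg hC (by linarith)
end
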